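/- Let U ∈ ℝ^{n×m} and Φ ∈ ℝ^{s×m} be fixed with n ≥ 1, m ≥ 1. If for every E ∈ ℝ^{n×m} there exists Λ_E ∈ ℝ^{n×s} with U - Λ_E Φ = E, then Φ is left-invertible (there exists Φ⁻ with Φ⁻Φ = I_m). -/

import Mathlib

namespace Matrix

variable {l m n R : Type*} [Fintype m] [Semiring R]

theorem vecMul_surjective_of_mul_left_surjective [Nonempty l] {Φ : Matrix m n R}
    (h : Function.Surjective fun Λ : Matrix l m R => Λ * Φ) :
    Function.Surjective Φ.vecMul := fun v => by
  obtain ⟨Λ, hΛ⟩ := h (of fun _ => v)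
  let i : l := Classical.arbitrary l
  exact ⟨Λ i, congrFun hΛ i⟩

end Matrix

theorem stmt_2_general {n m s : ℕ} (hn : 1 ≤ n)
    (U : Matrix (Fin n) (Fin m) ℝ)
    (Φ : Matrix (Fin s) (Fin m) ℝ)
    (h : ∀ E : Matrix (Fin n) (Fin m) ℝ,
      ∃ Λ : Matrix (Fin n) (Fin s) ℝ, U - Λ * Φ = E) :
    ∃ Φinv : Matrix (Fin m) (Fin s) ℝ, Φinv * Φ = 1 := by
  have : Nonempty (Fin n) := ⟨⟨0, hn⟩⟩
  have mul_surjective : Function.Surjective fun Λ : Matrix (Fin n) (Fin s) ℝ => Λ * Φ :=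
    fun F => (h (U - F)).imp fun _ => sub_right_inj.mp
  exact Matrix.vecMul_surjective_iff_exists_left_inverse.mp
    (Matrix.vecMul_surjective_of_mul_left_surjective mul_surjective)

/-- If every utility matrix `E` can be implemented by some payment scheme `Λ`
(i.e. `U - Λ * Φ = E`), with `n ≥ 1` and `m ≥ 1`, then `Φ` is left-invertible. -/
theorem stmt_2 {n m s : ℕ} (hn : 1 ≤ n) (hm : 1 ≤ m)
    (U : Matrix (Fin n) (Fin m) ℝ)
    (Φ : Matrix (Fin s) (Fin m) ℝ)
    (h : ∀ E : Matrix (Fin n) (Fin m) ℝ,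
      ∃ Λ : Matrix (Fin n) (Fin s) ℝ, U - Λ * Φ = E) :
    ∃ Φinv : Matrix (Fin m) (Fin s) ℝ, Φinv * Φ = 1 :=
  stmt_2_general hn U Φ h
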